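/- arXiv:2605.16997 — 6 statements merged into one kernel-verified Lean document; each statement's English description precedes it below -/
import Mathlib

section
/- Let ξ ∈ ℝ. Let Q and H be symmetric traceless real 3×3 matrices, let M be a real 3×3 matrix with tr M = 0, and let P be an arbitrary real 3×3 matrix. Set D = (M + Mᵀ)/2, Ω = (M − Mᵀ)/2, G = Q + (1/3)I₃, S(M,Q) = ξ(DG + GD) − 2ξ G tr(QM) + ΩQ − QΩ, τ = −ξGH − ξHG + 2ξG tr(QH) − P, and σ = QH − HQ. Then (τ + σ):M + H:S(M,Q) + P:M = 0. -/
open Matrix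

/-- Frobenius inner product of real 3×3 matrices. -/
def fro (A B : Matrix (Fin 3) (Fin 3) ℝ) : ℝ :=
  ∑ i, ∑ j, A i j * B i j

set_option maxHeartbeats 2000000 in
/-- Lemma 2.1 (basic cancellation) of the paper:
`(τ + σ):M + H:S(M,Q) + P:M = 0`. -/
theorem basic_cancellation (ξ : ℝ) (Q H M P : Matrix (Fin 3) (Fin 3) ℝ)
    (hQs : Qᵀ = Q) (hQt : Matrix.trace Q = 0)
    (hHs : Hᵀ = H) (hHt : Matrix.trace H = 0)
    (hM : Matrix.trace M = 0) :
    let D : Matrix (Fin 3) (Fin 3) ℝ := (1 / 2 : ℝ) • (M + Mᵀ)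
    let Ω : Matrix (Fin 3) (Fin 3) ℝ := (1 / 2 : ℝ) • (M - Mᵀ)
    let G : Matrix (Fin 3) (Fin 3) ℝ := Q + (1 / 3 : ℝ) • (1 : Matrix (Fin 3) (Fin 3) ℝ)
    let S : Matrix (Fin 3) (Fin 3) ℝ :=
      ξ • (D * G + G * D) - (2 * ξ * Matrix.trace (Q * M)) • G + (Ω * Q - Q * Ω)
    let τ : Matrix (Fin 3) (Fin 3) ℝ :=
      -(ξ • (G * H)) - ξ • (H * G) + (2 * ξ * Matrix.trace (Q * H)) • G - P
    let σ : Matrix (Fin 3) (Fin 3) ℝ := Q * H - H * Q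
    fro (τ + σ) M + fro H S + fro P M = 0 := by
  intro D Om G S tau sig
  have q10 := congrFun (congrFun hQs 1) 0
  have q20 := congrFun (congrFun hQs 2) 0
  have q21 := congrFun (congrFun hQs 2) 1
  have h10 := congrFun (congrFun hHs 1) 0
  have h20 := congrFun (congrFun hHs 2) 0
  have h21 := congrFun (congrFun hHs 2) 1
  simp only [Matrix.transpose_apply] at q10 q20 q21 h10 h20 h21
  simp only [Matrix.trace, Matrix.diag, Fin.sum_univ_three] at hQt hHt hM
  have hq22 : Q 2 2 = -(Q 0 0 + Q 1 1) := by linarith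
  have hh22 : H 2 2 = -(H 0 0 + H 1 1) := by linarith
  have hm22 : M 2 2 = -(M 0 0 + M 1 1) := by linarith
  simp only [D, Om, G, S, tau, sig, fro, Matrix.trace, Matrix.diag, Fin.sum_univ_three,
    Matrix.mul_apply, Matrix.add_apply, Matrix.sub_apply, Matrix.smul_apply,
    Matrix.neg_apply, Matrix.one_apply, Matrix.transpose_apply, smul_eq_mul]
  simp only [q10, q20, q21, h10, h20, h21, hq22, hh22, hm22]
  norm_num [Fin.ext_iff]
  ring
end

section
/- Let Q and H be symmetric real 3×3 matrices and let M be an arbitrary real 3×3 matrix with Ω = (M − Mᵀ)/2. Then (QH − HQ):M + H:(ΩQ − QΩ) = 0, where A:B denotes the Frobenius inner product. -/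
open Matrix

/-- Cancellation of the skew stress `σ = QH − HQ` against the corotational part
of the stretching term: `(QH − HQ):M + H:(ΩQ − QΩ) = 0`. -/
theorem skew_stress_cancellation (Q H M : Matrix (Fin 3) (Fin 3) ℝ)
    (hQ : Qᵀ = Q) (hH : Hᵀ = H) :
    let Ω : Matrix (Fin 3) (Fin 3) ℝ := (1 / 2 : ℝ) • (M - Mᵀ)
    fro (Q * H - H * Q) M + fro H (Ω * Q - Q * Ω) = 0 := by
  intro Ω
  have hQ' : ∀ i j, Q j i = Q i j := fun i j => congrFun (congrFun hQ i) j
  have hH' : ∀ i j, H j i = H i j := fun i j => congrFun (congrFun hH i) j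
  simp only [fro, Ω, Matrix.mul_apply, Matrix.sub_apply, Matrix.smul_apply,
    Matrix.transpose_apply, Fin.sum_univ_three, smul_eq_mul]
  simp only [hQ' 0 1, hQ' 0 2, hQ' 1 2, hH' 0 1, hH' 0 2, hH' 1 2]
  ring
end

section
/- Let ξ ∈ ℝ. Let Q be a symmetric real 3×3 matrix, H a symmetric real 3×3 matrix with tr H = 0, and M a real 3×3 matrix with tr M = 0. Set D = (M + Mᵀ)/2, G = Q + (1/3)I₃, S_ξ(M,Q) = ξ(DG + GD) − 2ξ G tr(QM), and τ_ξ(Q,H) = −ξGH − ξHG + 2ξG tr(QH). Then τ_ξ(Q,H):M + H:S_ξ(M,Q) = 0. -/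
open Matrix

lemma fro_eq_trace (A B : Matrix (Fin 3) (Fin 3) ℝ) :
    fro A B = Matrix.trace (Aᵀ * B) := by
  simp only [fro, Matrix.trace, Matrix.diag, Matrix.mul_apply, Matrix.transpose_apply]
  rw [Finset.sum_comm]

/-- Cancellation of the ξ-dependent (tumbling/alignment) parts of the stress and
stretching term: `τ_ξ(Q,H):M + H:S_ξ(M,Q) = 0`. -/
theorem xi_cancellation (ξ : ℝ) (Q H M : Matrix (Fin 3) (Fin 3) ℝ)
    (hQ : Qᵀ = Q) (hH : Hᵀ = H) (hHt : Matrix.trace H = 0)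
    (hM : Matrix.trace M = 0) :
    let D : Matrix (Fin 3) (Fin 3) ℝ := (1 / 2 : ℝ) • (M + Mᵀ)
    let G : Matrix (Fin 3) (Fin 3) ℝ := Q + (1 / 3 : ℝ) • (1 : Matrix (Fin 3) (Fin 3) ℝ)
    let Sξ : Matrix (Fin 3) (Fin 3) ℝ :=
      ξ • (D * G + G * D) - (2 * ξ * Matrix.trace (Q * M)) • G
    let τξ : Matrix (Fin 3) (Fin 3) ℝ :=
      -(ξ • (G * H)) - ξ • (H * G) + (2 * ξ * Matrix.trace (Q * H)) • G
    fro τξ M + fro H Sξ = 0 := by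
  intro D G Sξ τξ
  have hG : Gᵀ = G := by
    simp [G, Matrix.transpose_add, Matrix.transpose_smul, hQ]
  have hGM : Matrix.trace (G * M) = Matrix.trace (Q * M) := by
    simp [G, Matrix.add_mul, Matrix.smul_mul, hM]
  have hGH : Matrix.trace (G * H) = Matrix.trace (Q * H) := by
    simp [G, Matrix.add_mul, Matrix.smul_mul, hHt]
  -- transposition/cyclicity identities
  have t1 : Matrix.trace (H * Mᵀ * G) = Matrix.trace (H * G * M) := by
    rw [← Matrix.trace_transpose (H * Mᵀ * G)]
    simp only [Matrix.transpose_mul, Matrix.transpose_transpose, hG, hH]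
    rw [← Matrix.mul_assoc, Matrix.trace_mul_cycle]
  have t2 : Matrix.trace (H * G * Mᵀ) = Matrix.trace (G * H * M) := by
    rw [← Matrix.trace_transpose (H * G * Mᵀ)]
    simp only [Matrix.transpose_mul, Matrix.transpose_transpose, hG, hH]
    rw [Matrix.trace_mul_comm, Matrix.mul_assoc]
  have t3 : Matrix.trace (H * M * G) = Matrix.trace (G * H * M) := by
    rw [Matrix.trace_mul_comm, ← Matrix.mul_assoc]
  have e1 : fro τξ M = -(ξ * Matrix.trace (H * G * M)) - ξ * Matrix.trace (G * H * M)
      + (2 * ξ * Matrix.trace (Q * H)) * Matrix.trace (G * M) := by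
    rw [fro_eq_trace]
    simp only [τξ, Matrix.transpose_add, Matrix.transpose_sub, Matrix.transpose_neg,
      Matrix.transpose_smul, Matrix.transpose_mul, hG, hH,
      Matrix.add_mul, Matrix.sub_mul, Matrix.neg_mul, Matrix.smul_mul,
      Matrix.trace_add, Matrix.trace_sub, Matrix.trace_neg, Matrix.trace_smul,
      smul_eq_mul, Matrix.mul_assoc]
  have e2 : fro H Sξ = ξ * ((1/2) * (Matrix.trace (H * M * G) + Matrix.trace (H * Mᵀ * G))
      + (1/2) * (Matrix.trace (H * G * M) + Matrix.trace (H * G * Mᵀ)))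
      - (2 * ξ * Matrix.trace (Q * M)) * Matrix.trace (G * H) := by
    rw [fro_eq_trace, hH]
    simp only [Sξ, D, Matrix.mul_sub, Matrix.mul_add, Matrix.mul_smul, Matrix.smul_mul,
      smul_add, Matrix.add_mul,
      Matrix.trace_add, Matrix.trace_sub, Matrix.trace_smul, smul_eq_mul]
    rw [Matrix.trace_mul_comm H G]
    rw [← Matrix.mul_assoc H M G, ← Matrix.mul_assoc H Mᵀ G, ← Matrix.mul_assoc H G M,
      ← Matrix.mul_assoc H G Mᵀ]
    ring
  rw [e1, e2, t1, t2, t3, hGM, hGH]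
  ring
end

section
/- Let a, b, c ∈ ℝ and let A₀ = diag(2, −1, −1) ∈ Matrix (Fin 3) (Fin 3) ℝ. Define B(Q) = b(Q² − (tr(Q²)/3) I₃) − c tr(Q²) Q. Then for every q ∈ ℝ, −a(qA₀) + B(qA₀) = (−aq + bq² − 6cq³) A₀. -/
open Matrix

/-- The polynomial bulk force `B(Q) = b(Q² − (tr(Q²)/3) I₃) − c tr(Q²) Q`. -/
noncomputable def bulkB (b c : ℝ) (Q : Matrix (Fin 3) (Fin 3) ℝ) :
    Matrix (Fin 3) (Fin 3) ℝ :=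
  b • (Q * Q - (Matrix.trace (Q * Q) / 3) • (1 : Matrix (Fin 3) (Fin 3) ℝ))
    - (c * Matrix.trace (Q * Q)) • Q

/-- The uniaxial reduction (7.1): along the ansatz `Q = q A₀` with
`A₀ = diag(2,−1,−1)` the bulk force reduces to the scalar nonlinearity
`−aq + bq² − 6cq³`. -/
theorem uniaxial_reduction (a b c : ℝ) :
    let A₀ : Matrix (Fin 3) (Fin 3) ℝ := Matrix.diagonal ![2, -1, -1]
    ∀ q : ℝ,
      -(a • (q • A₀)) + bulkB b c (q • A₀) = (-(a * q) + b * q ^ 2 - 6 * c * q ^ 3) • A₀ := by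
  intro A₀ q
  ext i j
  fin_cases i <;> fin_cases j <;>
    simp [bulkB, A₀, Matrix.mul_apply, Matrix.trace, Fin.sum_univ_succ, Matrix.one_apply,
      Matrix.diagonal] <;> ring
end

section
/- Let a, b ∈ ℝ and c > 0, L > 0. There exist constants M ≥ 1 and c₀ > 0 such that for every u ∈ ℝ³, every real s ≥ 0, and every symmetric traceless real 3×3 matrix Q, (1/2)‖u‖² + (L/2)s + (a/2)|Q|² − (b/3)tr(Q³) + (c/4)|Q|⁴ + (M/2)|Q|² ≥ c₀(‖u‖² + s + |Q|² + |Q|⁴). -/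
open Matrix

/-- Frobenius norm of a real 3×3 matrix. -/
noncomputable def fnorm (A : Matrix (Fin 3) (Fin 3) ℝ) : ℝ :=
  Real.sqrt (∑ i, ∑ j, A i j * A i j)

lemma fnorm_nonneg (A : Matrix (Fin 3) (Fin 3) ℝ) : 0 ≤ fnorm A :=
  Real.sqrt_nonneg _

lemma abs_entry_le_fnorm (A : Matrix (Fin 3) (Fin 3) ℝ) (i j : Fin 3) :
    |A i j| ≤ fnorm A := by
  have h1 : A i j * A i j ≤ ∑ j', A i j' * A i j' :=
    Finset.single_le_sum (f := fun j' => A i j' * A i j')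
      (fun k _ => mul_self_nonneg _) (Finset.mem_univ j)
  have h2 : (∑ j', A i j' * A i j') ≤ ∑ i', ∑ j', A i' j' * A i' j' :=
    Finset.single_le_sum (f := fun i' => ∑ j', A i' j' * A i' j')
      (fun k _ => Finset.sum_nonneg fun l _ => mul_self_nonneg _) (Finset.mem_univ i)
  have : |A i j| = Real.sqrt (A i j * A i j) := by
    rw [← Real.sqrt_sq_eq_abs]; ring_nf
  rw [this]
  exact Real.sqrt_le_sqrt (h1.trans h2)

lemma trace_cube_bound (Q : Matrix (Fin 3) (Fin 3) ℝ) :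
    |Matrix.trace (Q * Q * Q)| ≤ 27 * fnorm Q ^ 3 := by
  have ht : Matrix.trace (Q * Q * Q) = ∑ i, ∑ k, ∑ j, Q i j * Q j k * Q k i := by
    simp [Matrix.trace, Matrix.diag, Matrix.mul_apply, Finset.sum_mul]
  rw [ht]
  have hx := fnorm_nonneg Q
  calc |∑ i, ∑ k, ∑ j, Q i j * Q j k * Q k i|
      ≤ ∑ i, ∑ k, ∑ j, |Q i j * Q j k * Q k i| := by
        refine (Finset.abs_sum_le_sum_abs _ _).trans (Finset.sum_le_sum fun i _ => ?_)
        refine (Finset.abs_sum_le_sum_abs _ _).trans (Finset.sum_le_sum fun k _ => ?_)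
        exact Finset.abs_sum_le_sum_abs _ _
    _ ≤ ∑ _i : Fin 3, ∑ _k : Fin 3, ∑ _j : Fin 3, fnorm Q ^ 3 := by
        refine Finset.sum_le_sum fun i _ => Finset.sum_le_sum fun k _ =>
          Finset.sum_le_sum fun j _ => ?_
        rw [abs_mul, abs_mul]
        have h1 := abs_entry_le_fnorm Q i j
        have h2 := abs_entry_le_fnorm Q j k
        have h3 := abs_entry_le_fnorm Q k i
        have n1 := abs_nonneg (Q i j)
        have n2 := abs_nonneg (Q j k)
        have n3 := abs_nonneg (Q k i)
        calc |Q i j| * |Q j k| * |Q k i| ≤ fnorm Q * fnorm Q * fnorm Q :=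
              mul_le_mul (mul_le_mul h1 h2 n2 hx) h3 n3 (by positivity)
          _ = fnorm Q ^ 3 := by ring
    _ = 27 * fnorm Q ^ 3 := by simp [Fin.sum_univ_three]; ring

/-- Pointwise coercivity (4.8) defining the modified tail energy: for `c > 0`,
`L > 0` there are `M ≥ 1` and `c₀ > 0` with
`(1/2)‖u‖² + (L/2)s + (a/2)|Q|² − (b/3)tr(Q³) + (c/4)|Q|⁴ + (M/2)|Q|²
  ≥ c₀(‖u‖² + s + |Q|² + |Q|⁴)`. -/
theorem modified_coercivity (a b c L : ℝ) (hc : 0 < c) (hL : 0 < L) :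
    ∃ M : ℝ, 1 ≤ M ∧ ∃ c₀ : ℝ, 0 < c₀ ∧
      ∀ u : EuclideanSpace ℝ (Fin 3), ∀ s : ℝ, 0 ≤ s →
        ∀ Q : Matrix (Fin 3) (Fin 3) ℝ, Qᵀ = Q → Matrix.trace Q = 0 →
          1 / 2 * ‖u‖ ^ 2 + L / 2 * s + a / 2 * fnorm Q ^ 2
              - b / 3 * Matrix.trace (Q * Q * Q) + c / 4 * fnorm Q ^ 4
              + M / 2 * fnorm Q ^ 2
            ≥ c₀ * (‖u‖ ^ 2 + s + fnorm Q ^ 2 + fnorm Q ^ 4) := by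
  refine ⟨1 + |a| + 324 * b ^ 2 / c, ?_, min (min (1/4) (L/4)) (c/8), ?_, ?_⟩
  · have : 0 ≤ 324 * b ^ 2 / c := by positivity
    have := abs_nonneg a
    linarith
  · have h1 : (0:ℝ) < min (1/4) (L/4) := lt_min (by norm_num) (by linarith)
    exact lt_min h1 (by linarith)
  · intro u s hs Q _ _
    set c₀ : ℝ := min (min (1/4) (L/4)) (c/8) with hc₀
    set x : ℝ := fnorm Q with hxdef
    have hx : 0 ≤ x := fnorm_nonneg Q
    have hc₁ : c₀ ≤ 1/4 := (min_le_left _ _).trans (min_le_left _ _)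
    have hc₂ : c₀ ≤ L/4 := (min_le_left _ _).trans (min_le_right _ _)
    have hc₃ : c₀ ≤ c/8 := min_le_right _ _
    -- bound the cubic trace term
    have htr := trace_cube_bound Q
    have hT : b / 3 * Matrix.trace (Q * Q * Q) ≤ 9 * |b| * x ^ 3 := by
      calc b / 3 * Matrix.trace (Q * Q * Q) ≤ |b / 3 * Matrix.trace (Q * Q * Q)| :=
            le_abs_self _
        _ = |b| / 3 * |Matrix.trace (Q * Q * Q)| := by
            rw [abs_mul, abs_div]; norm_num
        _ ≤ |b| / 3 * (27 * x ^ 3) := by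
            apply mul_le_mul_of_nonneg_left htr (by positivity)
        _ = 9 * |b| * x ^ 3 := by ring
    -- AM-GM: 9|b|x³ ≤ (c/8)x⁴ + (162 b²/c) x²
    have hamgm : 9 * |b| * x ^ 3 ≤ c / 8 * x ^ 4 + 162 * b ^ 2 / c * x ^ 2 := by
      have hc' : (0:ℝ) < 8 * c := by linarith
      rw [show c / 8 * x ^ 4 + 162 * b ^ 2 / c * x ^ 2
          = (c ^ 2 * x ^ 4 + 1296 * b ^ 2 * x ^ 2) / (8 * c) by field_simp; ring,
        le_div_iff₀ hc']
      nlinarith [sq_nonneg (c * x ^ 2 - 36 * |b| * x), sq_abs b]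
    have hu : c₀ * ‖u‖ ^ 2 ≤ 1 / 2 * ‖u‖ ^ 2 := by nlinarith [sq_nonneg ‖u‖]
    have hs' : c₀ * s ≤ L / 2 * s := by nlinarith
    have h4 : c₀ * x ^ 4 ≤ c / 8 * x ^ 4 := by
      have : (0:ℝ) ≤ x ^ 4 := by positivity
      nlinarith
    have h2 : (c₀ + 162 * b ^ 2 / c) * x ^ 2
        ≤ (a / 2 + (1 + |a| + 324 * b ^ 2 / c) / 2) * x ^ 2 := by
      have hxx : (0:ℝ) ≤ x ^ 2 := by positivity
      have ha : -|a| ≤ a := neg_abs_le a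
      apply mul_le_mul_of_nonneg_right _ hxx
      have : 324 * b ^ 2 / c = 2 * (162 * b ^ 2 / c) := by ring
      rw [this]
      linarith
    linarith
end

section
/- Let ξ ∈ ℝ. Let Q be a symmetric traceless real 3×3 matrix and let M be a real 3×3 matrix with tr M = 0. Then S(M,Q) = ξ(DG + GD) − 2ξ G tr(QM) + ΩQ − QΩ, with D = (M + Mᵀ)/2, Ω = (M − Mᵀ)/2, G = Q + (1/3)I₃, is symmetric and traceless: S(M,Q)ᵀ = S(M,Q) and tr S(M,Q) = 0. -/
open Matrix

/-- The stretching term preserves the symmetric traceless constraint when the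
velocity field is divergence-free (algebraic content of Proposition 3.1). -/
theorem stretching_symm_traceless (ξ : ℝ) (Q M : Matrix (Fin 3) (Fin 3) ℝ)
    (hQs : Qᵀ = Q) (hQt : Matrix.trace Q = 0) (hM : Matrix.trace M = 0) :
    let D : Matrix (Fin 3) (Fin 3) ℝ := (1 / 2 : ℝ) • (M + Mᵀ)
    let Ω : Matrix (Fin 3) (Fin 3) ℝ := (1 / 2 : ℝ) • (M - Mᵀ)
    let G : Matrix (Fin 3) (Fin 3) ℝ := Q + (1 / 3 : ℝ) • (1 : Matrix (Fin 3) (Fin 3) ℝ)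
    let S : Matrix (Fin 3) (Fin 3) ℝ :=
      ξ • (D * G + G * D) - (2 * ξ * Matrix.trace (Q * M)) • G + (Ω * Q - Q * Ω)
    Sᵀ = S ∧ Matrix.trace S = 0 := by
  intro D Ω G S
  have hDt : Dᵀ = D := by
    simp only [D, transpose_smul, transpose_add, transpose_transpose, add_comm]
  have hΩt : Ωᵀ = -Ω := by
    simp only [Ω, transpose_smul, transpose_sub, transpose_transpose]
    rw [← smul_neg, neg_sub]
  have hGt : Gᵀ = G := by
    simp only [G, transpose_add, transpose_smul, transpose_one, hQs]
  constructor
  · simp only [S, transpose_add, transpose_sub, transpose_smul, transpose_mul,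
      hDt, hΩt, hGt, hQs]
    noncomm_ring
  · have htrD : Matrix.trace D = 0 := by
      simp [D, trace_add, trace_transpose, hM]
    have htrG : Matrix.trace G = 1 := by
      simp [G, hQt, Matrix.trace_one]
    have htrDG : Matrix.trace (D * G) = Matrix.trace (Q * M) := by
      have : Matrix.trace (Mᵀ * Q) = Matrix.trace (Q * M) := by
        rw [← Matrix.trace_transpose (Mᵀ * Q), transpose_mul, transpose_transpose, hQs]
      simp only [D, G, Matrix.smul_mul, Matrix.mul_add, Matrix.add_mul, Matrix.mul_smul,
        trace_smul, trace_add, Matrix.mul_one, this, Matrix.trace_mul_comm M Q, htrD]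
      have h2 : Matrix.trace (M * Q) = Matrix.trace (Q * M) := Matrix.trace_mul_comm M Q
      simp [trace_add, trace_smul, h2, hM, trace_transpose]
      ring
    simp only [S, trace_add, trace_sub, trace_smul, htrG, htrDG,
      Matrix.trace_mul_comm G D, Matrix.trace_mul_comm Ω Q, smul_eq_mul]
    ring
end
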